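/- For the system E4, the operator identity X⁴ − 2{L₁, X²} + 2HX² + H² + 4aL₂ = 0 holds, with H = ∂ₓ² + ∂_y² + a(x+iy), X = ∂ₓ + i∂_y, L₁ = ∂ₓ² + ax, L₂ = (i/2){x∂_y − y∂ₓ, X} − (a/4)(x+iy)². -/

import Mathlib

noncomputable section

open Complex

/-- Partial derivative in `x`. -/
def dx (f : ℝ × ℝ → ℂ) : ℝ × ℝ → ℂ := fun p => fderiv ℝ f p (1, 0)

/-- Partial derivative in `y`. -/
def dy (f : ℝ × ℝ → ℂ) : ℝ × ℝ → ℂ := fun p => fderiv ℝ f p (0, 1)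

/-- `M = x∂_y − y∂ₓ`. -/
def Mop (f : ℝ × ℝ → ℂ) : ℝ × ℝ → ℂ :=
  fun p => (p.1 : ℂ) * dy f p - (p.2 : ℂ) * dx f p

/-- `X = ∂ₓ + i∂_y`. -/
def Xop (f : ℝ × ℝ → ℂ) : ℝ × ℝ → ℂ := fun p => dx f p + I * dy f p

/-- `H = ∂ₓ² + ∂_y² + a(x+iy)`. -/
def Hop (a : ℂ) (f : ℝ × ℝ → ℂ) : ℝ × ℝ → ℂ :=
  fun p => dx (dx f) p + dy (dy f) p + a * ((p.1 : ℂ) + I * (p.2 : ℂ)) * f p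

/-- `L₁ = ∂ₓ² + a x`. -/
def L1 (a : ℂ) (f : ℝ × ℝ → ℂ) : ℝ × ℝ → ℂ :=
  fun p => dx (dx f) p + a * (p.1 : ℂ) * f p

/-- `L₂ = (i/2){x∂_y − y∂ₓ, X} − (a/4)(x+iy)²`. -/
def L2 (a : ℂ) (f : ℝ × ℝ → ℂ) : ℝ × ℝ → ℂ :=
  fun p => (I / 2) * (Mop (Xop f) p + Xop (Mop f) p)
    - (a / 4) * ((p.1 : ℂ) + I * (p.2 : ℂ)) ^ 2 * f p

@[fun_prop]
theorem contDiff_ofReal' : ContDiff ℝ (⊤ : ℕ∞) (fun x : ℝ => (x : ℂ)) := Complex.ofRealCLM.contDiff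

@[fun_prop]
theorem contDiff_dx {g : ℝ × ℝ → ℂ} (hg : ContDiff ℝ (⊤ : ℕ∞) g) : ContDiff ℝ (⊤ : ℕ∞) (dx g) :=
  (hg.fderiv_right (by simp)).clm_apply contDiff_const

@[fun_prop]
theorem contDiff_dy {g : ℝ × ℝ → ℂ} (hg : ContDiff ℝ (⊤ : ℕ∞) g) : ContDiff ℝ (⊤ : ℕ∞) (dy g) :=
  (hg.fderiv_right (by simp)).clm_apply contDiff_const

variable {g h : ℝ × ℝ → ℂ}

theorem dx_add (hg : ContDiff ℝ (⊤ : ℕ∞) g) (hh : ContDiff ℝ (⊤ : ℕ∞) h) :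
    dx (fun p => g p + h p) = fun p => dx g p + dx h p := by
  funext p
  simp only [dx, fderiv_fun_add ((hg.differentiable (by simp)).differentiableAt)
    ((hh.differentiable (by simp)).differentiableAt), ContinuousLinearMap.add_apply]

theorem dy_add (hg : ContDiff ℝ (⊤ : ℕ∞) g) (hh : ContDiff ℝ (⊤ : ℕ∞) h) :
    dy (fun p => g p + h p) = fun p => dy g p + dy h p := by
  funext p
  simp only [dy, fderiv_fun_add ((hg.differentiable (by simp)).differentiableAt)
    ((hh.differentiable (by simp)).differentiableAt), ContinuousLinearMap.add_apply]

theorem dx_sub (hg : ContDiff ℝ (⊤ : ℕ∞) g) (hh : ContDiff ℝ (⊤ : ℕ∞) h) :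
    dx (fun p => g p - h p) = fun p => dx g p - dx h p := by
  funext p
  simp only [dx, fderiv_fun_sub ((hg.differentiable (by simp)).differentiableAt)
    ((hh.differentiable (by simp)).differentiableAt), ContinuousLinearMap.sub_apply]

theorem dy_sub (hg : ContDiff ℝ (⊤ : ℕ∞) g) (hh : ContDiff ℝ (⊤ : ℕ∞) h) :
    dy (fun p => g p - h p) = fun p => dy g p - dy h p := by
  funext p
  simp only [dy, fderiv_fun_sub ((hg.differentiable (by simp)).differentiableAt)
    ((hh.differentiable (by simp)).differentiableAt), ContinuousLinearMap.sub_apply]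

theorem dx_cmul (c : ℂ) (hg : ContDiff ℝ (⊤ : ℕ∞) g) :
    dx (fun p => c * g p) = fun p => c * dx g p := by
  funext p
  simp only [dx, fderiv_const_mul ((hg.differentiable (by simp)).differentiableAt) c,
    ContinuousLinearMap.smul_apply, smul_eq_mul]

theorem dy_cmul (c : ℂ) (hg : ContDiff ℝ (⊤ : ℕ∞) g) :
    dy (fun p => c * g p) = fun p => c * dy g p := by
  funext p
  simp only [dy, fderiv_const_mul ((hg.differentiable (by simp)).differentiableAt) c,
    ContinuousLinearMap.smul_apply, smul_eq_mul]

theorem hasF_x (p : ℝ × ℝ) :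
    HasFDerivAt (fun q : ℝ × ℝ => ((q.1 : ℝ) : ℂ))
      (Complex.ofRealCLM.comp (ContinuousLinearMap.fst ℝ ℝ ℝ)) p :=
  (Complex.ofRealCLM.comp (ContinuousLinearMap.fst ℝ ℝ ℝ)).hasFDerivAt

theorem hasF_y (p : ℝ × ℝ) :
    HasFDerivAt (fun q : ℝ × ℝ => ((q.2 : ℝ) : ℂ))
      (Complex.ofRealCLM.comp (ContinuousLinearMap.snd ℝ ℝ ℝ)) p :=
  (Complex.ofRealCLM.comp (ContinuousLinearMap.snd ℝ ℝ ℝ)).hasFDerivAt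

theorem dx_xmul (hg : ContDiff ℝ (⊤ : ℕ∞) g) :
    dx (fun p => (p.1 : ℂ) * g p) = fun p => g p + (p.1 : ℂ) * dx g p := by
  funext p
  have hgd := (hg.differentiable (by simp)).differentiableAt (x := p)
  have hc := (hasF_x p).differentiableAt
  simp only [dx, fderiv_fun_mul hc hgd, ContinuousLinearMap.add_apply,
    ContinuousLinearMap.smul_apply, smul_eq_mul, (hasF_x p).fderiv]
  simp [ContinuousLinearMap.comp_apply]
  ring

theorem dy_xmul (hg : ContDiff ℝ (⊤ : ℕ∞) g) :
    dy (fun p => (p.1 : ℂ) * g p) = fun p => (p.1 : ℂ) * dy g p := by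
  funext p
  have hgd := (hg.differentiable (by simp)).differentiableAt (x := p)
  have hc := (hasF_x p).differentiableAt
  simp only [dy, fderiv_fun_mul hc hgd, ContinuousLinearMap.add_apply,
    ContinuousLinearMap.smul_apply, smul_eq_mul, (hasF_x p).fderiv]
  simp [ContinuousLinearMap.comp_apply]

theorem dx_ymul (hg : ContDiff ℝ (⊤ : ℕ∞) g) :
    dx (fun p => (p.2 : ℂ) * g p) = fun p => (p.2 : ℂ) * dx g p := by
  funext p
  have hgd := (hg.differentiable (by simp)).differentiableAt (x := p)
  have hc := (hasF_y p).differentiableAt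
  simp only [dx, fderiv_fun_mul hc hgd, ContinuousLinearMap.add_apply,
    ContinuousLinearMap.smul_apply, smul_eq_mul, (hasF_y p).fderiv]
  simp [ContinuousLinearMap.comp_apply]

theorem dy_ymul (hg : ContDiff ℝ (⊤ : ℕ∞) g) :
    dy (fun p => (p.2 : ℂ) * g p) = fun p => g p + (p.2 : ℂ) * dy g p := by
  funext p
  have hgd := (hg.differentiable (by simp)).differentiableAt (x := p)
  have hc := (hasF_y p).differentiableAt
  simp only [dy, fderiv_fun_mul hc hgd, ContinuousLinearMap.add_apply,
    ContinuousLinearMap.smul_apply, smul_eq_mul, (hasF_y p).fderiv]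
  simp [ContinuousLinearMap.comp_apply]
  ring

theorem dy_dx (hg : ContDiff ℝ (⊤ : ℕ∞) g) : dy (dx g) = dx (dy g) := by
  funext p
  have hd : DifferentiableAt ℝ (fderiv ℝ g) p :=
    ((hg.fderiv_right (m := (⊤ : ℕ∞)) (by simp)).differentiable (by simp)).differentiableAt
  have h1 : HasFDerivAt (dx g)
      ((ContinuousLinearMap.apply ℝ ℂ ((1:ℝ),(0:ℝ))).comp (fderiv ℝ (fderiv ℝ g) p)) p :=
    (ContinuousLinearMap.apply ℝ ℂ ((1:ℝ),(0:ℝ))).hasFDerivAt.comp p hd.hasFDerivAt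
  have h2 : HasFDerivAt (dy g)
      ((ContinuousLinearMap.apply ℝ ℂ ((0:ℝ),(1:ℝ))).comp (fderiv ℝ (fderiv ℝ g) p)) p :=
    (ContinuousLinearMap.apply ℝ ℂ ((0:ℝ),(1:ℝ))).hasFDerivAt.comp p hd.hasFDerivAt
  have hs : IsSymmSndFDerivAt ℝ g p := (hg.contDiffAt).isSymmSndFDerivAt (by rw [minSmoothness_of_isRCLikeNormedField]; exact WithTop.coe_le_coe.mpr (le_top : (2 : ℕ∞) ≤ ⊤))
  calc dy (dx g) p = fderiv ℝ (fderiv ℝ g) p (0,1) (1,0) := by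
        simp only [dy, h1.fderiv, ContinuousLinearMap.comp_apply,
          ContinuousLinearMap.apply_apply]
    _ = fderiv ℝ (fderiv ℝ g) p (1,0) (0,1) := hs _ _
    _ = dx (dy g) p := by
        simp only [dx, h2.fderiv, ContinuousLinearMap.comp_apply,
          ContinuousLinearMap.apply_apply]

theorem dx_axmul (c : ℂ) (hg : ContDiff ℝ (⊤ : ℕ∞) g) :
    dx (fun p => c * (p.1 : ℂ) * g p) = fun p => c * g p + c * (p.1 : ℂ) * dx g p := by
  have e : (fun p : ℝ × ℝ => c * (p.1 : ℂ) * g p) = fun p => c * ((p.1 : ℂ) * g p) := by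
    funext p; ring
  rw [e, dx_cmul c (by fun_prop), dx_xmul hg]
  funext p; ring

theorem dy_axmul (c : ℂ) (hg : ContDiff ℝ (⊤ : ℕ∞) g) :
    dy (fun p => c * (p.1 : ℂ) * g p) = fun p => c * (p.1 : ℂ) * dy g p := by
  have e : (fun p : ℝ × ℝ => c * (p.1 : ℂ) * g p) = fun p => c * ((p.1 : ℂ) * g p) := by
    funext p; ring
  rw [e, dy_cmul c (by fun_prop), dy_xmul hg]
  funext p; ring

theorem dx_zmul (c : ℂ) (hg : ContDiff ℝ (⊤ : ℕ∞) g) :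
    dx (fun p => c * ((p.1 : ℂ) + I * (p.2 : ℂ)) * g p)
      = fun p => c * g p + c * ((p.1 : ℂ) + I * (p.2 : ℂ)) * dx g p := by
  have e : (fun p : ℝ × ℝ => c * ((p.1 : ℂ) + I * (p.2 : ℂ)) * g p)
      = fun p => c * ((p.1 : ℂ) * g p) + (c * I) * ((p.2 : ℂ) * g p) := by
    funext p; ring
  rw [e, dx_add (by fun_prop) (by fun_prop), dx_cmul c (by fun_prop),
    dx_cmul (c * I) (by fun_prop), dx_xmul hg, dx_ymul hg]
  funext p; ring

theorem dy_zmul (c : ℂ) (hg : ContDiff ℝ (⊤ : ℕ∞) g) :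
    dy (fun p => c * ((p.1 : ℂ) + I * (p.2 : ℂ)) * g p)
      = fun p => c * I * g p + c * ((p.1 : ℂ) + I * (p.2 : ℂ)) * dy g p := by
  have e : (fun p : ℝ × ℝ => c * ((p.1 : ℂ) + I * (p.2 : ℂ)) * g p)
      = fun p => c * ((p.1 : ℂ) * g p) + (c * I) * ((p.2 : ℂ) * g p) := by
    funext p; ring
  rw [e, dy_add (by fun_prop) (by fun_prop), dy_cmul c (by fun_prop),
    dy_cmul (c * I) (by fun_prop), dy_xmul hg, dy_ymul hg]
  funext p; ring


theorem Xop_def (f : ℝ × ℝ → ℂ) : Xop f = fun p => dx f p + I * dy f p := rfl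
theorem Mop_def (f : ℝ × ℝ → ℂ) : Mop f = fun p => (p.1 : ℂ) * dy f p - (p.2 : ℂ) * dx f p := rfl
theorem Hop_def (a : ℂ) (f : ℝ × ℝ → ℂ) :
    Hop a f = fun p => dx (dx f) p + dy (dy f) p + a * ((p.1 : ℂ) + I * (p.2 : ℂ)) * f p := rfl
theorem L1_def (a : ℂ) (f : ℝ × ℝ → ℂ) :
    L1 a f = fun p => dx (dx f) p + a * (p.1 : ℂ) * f p := rfl
theorem L2_def (a : ℂ) (f : ℝ × ℝ → ℂ) :
    L2 a f = fun p => (I / 2) * (Mop (Xop f) p + Xop (Mop f) p)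
      - (a / 4) * ((p.1 : ℂ) + I * (p.2 : ℂ)) ^ 2 * f p := rfl

/-- E4 fourth-order identity: `X⁴ − 2{L₁,X²} + 2HX² + H² + 4aL₂ = 0`
as an operator identity on smooth functions. -/
theorem stmt9 (a : ℂ) (f : ℝ × ℝ → ℂ) (hf : ContDiff ℝ (⊤ : ℕ∞) f) :
    ∀ p, Xop (Xop (Xop (Xop f))) p
      - 2 * (L1 a (Xop (Xop f)) p + Xop (Xop (L1 a f)) p)
      + 2 * Hop a (Xop (Xop f)) p + Hop a (Hop a f) p + 4 * a * L2 a f p = 0 := by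
  intro p
  simp only [Xop_def, Mop_def, Hop_def, L1_def, L2_def]
  simp (disch := fun_prop) only [dx_add, dy_add, dx_sub, dy_sub, dx_cmul, dy_cmul,
    dx_axmul, dy_axmul, dx_zmul, dy_zmul, dx_xmul, dy_xmul, dx_ymul, dy_ymul, dy_dx]
  ring_nf
  have h2 : (I : ℂ) ^ 2 = -1 := Complex.I_sq
  have h3 : (I : ℂ) ^ 3 = -I := by rw [pow_succ, h2]; ring
  have h4 : (I : ℂ) ^ 4 = 1 := by rw [pow_succ, h3]; simp [Complex.I_mul_I]
  rw [h2, h3, h4]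
  ring
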